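/- Let n be an odd prime and r, s integers with s ≥ 1, 4s − r² > 0, 4s − r² not a perfect square, and n not dividing s·(4s − r²). Let λ and μ be integers with λ² + rλ + s ≡ 0 (mod n) and μ² + 1 ≡ 0 (mod n). Set B = (4 + 4s² + 8s + 8|r| + 8|r|s + 2(r² + 2s) + 2|r² − 2s|)^(1/4). Then for every integer k there exist integers k₁, k₂, k₃, k₄ such that k ≡ k₁ + k₂λ + k₃μ + k₄λμ (mod n) and max(|k₁|, |k₂|, |k₃|, |k₄|) ≤ 16·B³·n^(1/4). -/

import Mathlib

/-!
The kernel lattice `L = {u ∈ ℤ⁴ : n ∣ u₀ + u₁λ + u₂μ + u₃λμ}` has index at most `n`, so by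
pigeonhole it contains some `v ≠ 0` with all `|vᵢ| ≤ ⌊n^(1/4)⌋`. Reading `u` as
`u₀ + u₁Φ + u₂i + u₃Φi ∈ ℤ[Φ, i]`, `L` is the kernel of the ring map `Φ ↦ λ, i ↦ μ` to `ℤ/n`,
hence an ideal; so it contains `v·ℤ[Φ, i]`, whose basis `v, vΦ, vi, vΦi` is the column set of
the multiplication matrix of `v`. That matrix is nonsingular because `1, Φ, i, Φi` are
independent over `ℚ` (`√(4s - r²)` is irrational). Rounding the coordinates of `(k, 0, 0, 0)`
in this basis leaves a vector congruent to `k` whose entries are at most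
`2(s + |r| + 1)⌊n^(1/4)⌋ ≤ 16 B³ n^(1/4)`.
-/

open Matrix

theorem exists_ne_zero_abs_le_map_eq_zero {ι G : Type*} [Fintype ι] [DecidableEq ι]
    [AddCommGroup G] [Fintype G] (f : (ι → ℤ) →+ G) (m : ℕ)
    (hcard : Fintype.card G < (m + 1) ^ Fintype.card ι) :
    ∃ v ≠ 0, (∀ i, |v i| ≤ (m : ℤ)) ∧ f v = 0 := by
  let lift : (ι → Fin (m + 1)) → ι → ℤ := fun c i => (c i : ℤ)
  obtain ⟨c, c', hne, heq⟩ :=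
    Fintype.exists_ne_map_eq_of_card_lt (f ∘ lift) (by simpa using hcard)
  refine ⟨lift c - lift c', fun h => hne ?_, fun i => ?_, by simpa [sub_eq_zero] using heq⟩
  · ext i
    simpa [lift, sub_eq_zero] using congrFun h i
  · have := (c i).is_le
    have := (c' i).is_le
    simp only [lift, Pi.sub_apply, abs_le]
    omega

theorem Matrix.exists_two_mul_abs_sub_mulVec_le {ι : Type*} [Fintype ι] [DecidableEq ι]
    (A : Matrix ι ι ℤ) (hA : A.det ≠ 0) {C : ℤ} (hC : ∀ i j, |A i j| ≤ C) (x : ι → ℤ) :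
    ∃ β : ι → ℤ, ∀ i, 2 * |(x - A *ᵥ β) i| ≤ Fintype.card ι * C := by
  set AR : Matrix ι ι ℝ := A.map (Int.castRingHom ℝ)
  have hAR : IsUnit AR.det := by
    rw [isUnit_iff_ne_zero, show AR.det = A.det from (RingHom.map_det _ A).symm]
    exact_mod_cast hA
  set a : ι → ℝ := AR⁻¹ *ᵥ ((↑) ∘ x)
  refine ⟨fun j => round (a j), fun i => ?_⟩
  have hx : ((x - A *ᵥ fun j => round (a j)) i : ℝ) =
      ∑ j, (A i j : ℝ) * (a j - round (a j)) := by
    have hxa : ((↑) ∘ x : ι → ℝ) = AR *ᵥ a := by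
      rw [mulVec_mulVec, mul_nonsing_inv _ hAR, one_mulVec]
    have := congrFun hxa i
    simp only [Function.comp_apply, mulVec, dotProduct, AR, map_apply] at this
    simp [mulVec, dotProduct, this, mul_sub]
  have hterm : ∀ j, 2 * |(A i j : ℝ) * (a j - round (a j))| ≤ C := fun j => by
    rw [abs_mul]
    have := abs_sub_round (a j)
    have : (|A i j| : ℝ) ≤ C := by exact_mod_cast hC i j
    nlinarith [abs_nonneg (A i j : ℝ), abs_nonneg (a j - round (a j))]
  have : 2 * |(((x - A *ᵥ fun j => round (a j)) i : ℤ) : ℝ)| ≤ Fintype.card ι * C := by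
    rw [hx]
    calc 2 * |∑ j, (A i j : ℝ) * (a j - round (a j))|
        ≤ ∑ j, 2 * |(A i j : ℝ) * (a j - round (a j))| := by
          rw [← Finset.mul_sum]; gcongr; exact Finset.abs_sum_le_sum_abs _ _
      _ ≤ ∑ _j : ι, (C : ℝ) := Finset.sum_le_sum fun j _ => hterm j
      _ = Fintype.card ι * C := by simp
  exact_mod_cast this

theorem Irrational.eq_zero_of_add_mul_eq_zero {q : ℝ} (hq : Irrational q) {a b : ℤ}
    (h : (a : ℝ) + b * q = 0) : a = 0 ∧ b = 0 := by
  obtain rfl : b = 0 := by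
    by_contra hb
    exact (hq.intCast_mul hb).ne_int (-a) (by push_cast; linarith)
  simpa using h

theorem Nat.sqrt_sqrt_pow_four_le (n : ℕ) : Nat.sqrt (Nat.sqrt n) ^ 4 ≤ n :=
  calc Nat.sqrt (Nat.sqrt n) ^ 4 = (Nat.sqrt (Nat.sqrt n) ^ 2) ^ 2 := by ring
    _ ≤ Nat.sqrt n ^ 2 := Nat.pow_le_pow_left (Nat.sqrt_le' _) 2
    _ ≤ n := Nat.sqrt_le' n

theorem Nat.lt_sqrt_sqrt_add_one_pow_four (n : ℕ) : n < (Nat.sqrt (Nat.sqrt n) + 1) ^ 4 :=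
  calc n < (Nat.sqrt n + 1) ^ 2 := Nat.lt_succ_sqrt' n
    _ ≤ ((Nat.sqrt (Nat.sqrt n) + 1) ^ 2) ^ 2 :=
      Nat.pow_le_pow_left (Nat.lt_succ_sqrt' _) 2
    _ = (Nat.sqrt (Nat.sqrt n) + 1) ^ 4 := by ring

theorem two_mul_mul_le_sixteen_mul_rpow {C X m N : ℝ} (hC : 1 ≤ C) (hCX : C ^ 2 ≤ X)
    (hm : 0 ≤ m) (hmN : m ^ 4 ≤ N) :
    2 * C * m ≤ 16 * (X ^ (1 / 4 : ℝ)) ^ 3 * N ^ (1 / 4 : ℝ) := by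
  have rpow_pow_four : ∀ {y : ℝ}, 0 ≤ y → (y ^ (1 / 4 : ℝ)) ^ 4 = y := fun hy => by
    rw [one_div]; exact_mod_cast Real.rpow_inv_natCast_pow hy four_ne_zero
  have hX : 1 ≤ X := by nlinarith
  have hCB : C ≤ (X ^ (1 / 4 : ℝ)) ^ 2 := le_of_pow_le_pow_left₀ two_ne_zero
    (pow_nonneg (Real.rpow_nonneg (by linarith) _) 2)
    (by rw [← pow_mul, rpow_pow_four (by linarith)]; exact hCX)
  have hN0 : 0 ≤ N := (pow_nonneg hm 4).trans hmN
  have hN : 0 ≤ N ^ (1 / 4 : ℝ) := Real.rpow_nonneg hN0 _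
  have hmN' : m ≤ N ^ (1 / 4 : ℝ) :=
    le_of_pow_le_pow_left₀ four_ne_zero hN (by rw [rpow_pow_four hN0]; exact hmN)
  have hB : (X ^ (1 / 4 : ℝ)) ^ 2 ≤ (X ^ (1 / 4 : ℝ)) ^ 3 :=
    pow_le_pow_right₀ (Real.one_le_rpow hX (by norm_num)) (by norm_num)
  calc 2 * C * m ≤ 2 * (X ^ (1 / 4 : ℝ)) ^ 2 * N ^ (1 / 4 : ℝ) := by gcongr
    _ ≤ 16 * (X ^ (1 / 4 : ℝ)) ^ 3 * N ^ (1 / 4 : ℝ) := by gcongr; norm_num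

theorem add_abs_add_one_sq_le {r s : ℤ} (hs : 0 ≤ s) :
    (s + |r| + 1) ^ 2 ≤ 4 + 4 * s ^ 2 + 8 * s + 8 * |r| + 8 * |r| * s + 2 * (r ^ 2 + 2 * s) +
      2 * |r ^ 2 - 2 * s| := by
  nlinarith [sq_abs r, abs_nonneg r, abs_nonneg (r ^ 2 - 2 * s)]

namespace GLV

variable {R : Type*} [CommRing R]

def eval (x y : R) : (Fin 4 → ℤ) →ₗ[ℤ] R := Fintype.linearCombination ℤ ![1, x, y, x * y]

theorem eval_apply (x y : R) (u : Fin 4 → ℤ) :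
    eval x y u = u 0 + u 1 * x + u 2 * y + u 3 * (x * y) := by
  simp [eval, Fintype.linearCombination_apply, Fin.sum_univ_four]

/-- The matrix, in the basis `1, x, y, xy`, of multiplication by `v` in the ring
`ℤ[x, y]/(x² + rx + s, y² + 1)`. -/
def mulMatrix (r s : ℤ) (v : Fin 4 → ℤ) : Matrix (Fin 4) (Fin 4) ℤ :=
  !![v 0, -(s * v 1), -v 2, s * v 3;
     v 1, v 0 - r * v 1, -v 3, -(v 2 - r * v 3);
     v 2, -(s * v 3), v 0, -(s * v 1);
     v 3, v 2 - r * v 3, v 1, v 0 - r * v 1]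

theorem eval_mulMatrix_mulVec {x y : R} {r s : ℤ} (hx : x ^ 2 + r * x + s = 0)
    (hy : y ^ 2 + 1 = 0) (v q : Fin 4 → ℤ) :
    eval x y (mulMatrix r s v *ᵥ q) = eval x y v * eval x y q := by
  simp only [mulMatrix, Fin.isValue, neg_sub, cons_mulVec, dotProduct, Fin.sum_univ_four,
    cons_val_zero, cons_val_one, neg_mul, cons_val, empty_mulVec, eval_apply, Int.cast_add,
    Int.cast_mul, Int.cast_neg, Int.cast_sub]
  linear_combination (-((v 1 + v 3 * y) * (q 1 + q 3 * y))) * hx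
    - (v 2 * q 2 + (v 2 * q 3 + v 3 * q 2) * x - (r * x + s) * (v 3 * q 3)) * hy

theorem abs_mulMatrix_le {r s m : ℤ} {v : Fin 4 → ℤ} (hv : ∀ i, |v i| ≤ m) (i j : Fin 4) :
    |mulMatrix r s v i j| ≤ (|s| + |r| + 1) * m := by
  have hm : 0 ≤ m := (abs_nonneg _).trans (hv 0)
  have h1 : ∀ i, |v i| ≤ (|s| + |r| + 1) * m := fun i => by
    nlinarith [hv i, abs_nonneg s, abs_nonneg r]
  have h2 : ∀ i, |s| * |v i| ≤ (|s| + |r| + 1) * m := fun i => by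
    nlinarith [hv i, abs_nonneg s, abs_nonneg r, abs_nonneg (v i)]
  have h3 : ∀ i j, |v i - r * v j| ≤ (|s| + |r| + 1) * m := fun i j => by
    have := abs_sub (v i) (r * v j)
    rw [abs_mul] at this; nlinarith [hv i, hv j, abs_nonneg s, abs_nonneg r, abs_nonneg (v j)]
  have h4 : ∀ i j, |r * v j - v i| ≤ (|s| + |r| + 1) * m := fun i j => by
    rw [abs_sub_comm]; exact h3 i j
  fin_cases i <;> fin_cases j <;> simp [mulMatrix, abs_mul, h1, h2, h3, h4]

noncomputable def phi (r s : ℤ) : ℂ := ⟨-r / 2, √(4 * s - r ^ 2) / 2⟩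

theorem phi_sq_add_mul_add (r s : ℤ) (hpos : 0 < 4 * s - r ^ 2) :
    phi r s ^ 2 + r * phi r s + s = 0 := by
  have hD : (0 : ℝ) ≤ 4 * s - r ^ 2 := by exact_mod_cast hpos.le
  have hsq := Real.mul_self_sqrt hD
  unfold phi
  set t := √(4 * s - r ^ 2 : ℝ)
  apply Complex.ext
  · simp only [sq, Complex.add_re, Complex.mul_re, Complex.intCast_re, Complex.intCast_im,
      zero_mul, sub_zero, Complex.zero_re]
    linear_combination (-1 / 4 : ℝ) * hsq
  · simp only [sq, Complex.add_im, Complex.mul_im, Complex.intCast_re, Complex.intCast_im,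
      zero_mul, add_zero, Complex.zero_im]
    ring

theorem eval_phi_I_injective (r s : ℤ) (hpos : 0 < 4 * s - r ^ 2)
    (hnsq : ¬ IsSquare (4 * s - r ^ 2)) : Function.Injective (eval (phi r s) Complex.I) := by
  have hirr : Irrational √(4 * s - r ^ 2 : ℝ) := by
    exact_mod_cast (irrational_sqrt_intCast_iff_of_nonneg hpos.le).mpr hnsq
  refine (injective_iff_map_eq_zero _).mpr fun u hu => ?_
  have hre := congrArg Complex.re hu
  have him := congrArg Complex.im hu
  simp only [phi, eval_apply, Fin.isValue, Complex.add_re, Complex.intCast_re, Complex.mul_re,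
    Complex.intCast_im, zero_mul, sub_zero, Complex.I_re, mul_zero, Complex.I_im, mul_one,
    sub_self, add_zero, zero_sub, mul_neg, Complex.mul_im, Complex.zero_re, Complex.add_im,
    zero_add, neg_zero, Complex.zero_im] at hre him
  obtain ⟨h0, h3⟩ := hirr.eq_zero_of_add_mul_eq_zero (a := 2 * u 0 - u 1 * r) (b := -u 3)
    (by push_cast; linarith)
  obtain ⟨h2, h1⟩ := hirr.eq_zero_of_add_mul_eq_zero (a := 2 * u 2 - u 3 * r) (b := u 1)
    (by push_cast; linarith)
  ext i
  fin_cases i <;> simp_all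

theorem det_mulMatrix_ne_zero {r s : ℤ} (hpos : 0 < 4 * s - r ^ 2)
    (hnsq : ¬ IsSquare (4 * s - r ^ 2)) {v : Fin 4 → ℤ} (hv : v ≠ 0) :
    (mulMatrix r s v).det ≠ 0 := by
  intro hdet
  obtain ⟨q, hq, hvq⟩ := exists_mulVec_eq_zero_iff.mpr hdet
  have hprod := eval_mulMatrix_mulVec (phi_sq_add_mul_add r s hpos)
    (by rw [Complex.I_sq]; ring) v q
  have hzero := (injective_iff_map_eq_zero' _).mp (eval_phi_I_injective r s hpos hnsq)
  rw [hvq, map_zero, eq_comm, mul_eq_zero, hzero, hzero] at hprod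
  exact hprod.elim hv hq

end GLV

open GLV

theorem glv_four_dim_decomposition_LLL_general
    (n : ℕ) (hn : n.Prime)
    (r s : ℤ) (hs : 1 ≤ s)
    (hpos : 0 < 4 * s - r ^ 2)
    (hnsq : ¬ IsSquare (4 * s - r ^ 2))
    (lam mu : ℤ)
    (hlam : (n : ℤ) ∣ lam ^ 2 + r * lam + s)
    (hmu : (n : ℤ) ∣ mu ^ 2 + 1)
    (k : ℤ) :
    ∃ k₁ k₂ k₃ k₄ : ℤ,
      k ≡ k₁ + k₂ * lam + k₃ * mu + k₄ * lam * mu [ZMOD (n : ℤ)] ∧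
      ((max (max |k₁| |k₂|) (max |k₃| |k₄|) : ℤ) : ℝ) ≤
        16 * (((4 + 4 * s ^ 2 + 8 * s + 8 * |r| + 8 * |r| * s + 2 * (r ^ 2 + 2 * s) +
          2 * |r ^ 2 - 2 * s| : ℤ) : ℝ) ^ ((1 : ℝ) / 4)) ^ 3 * (n : ℝ) ^ ((1 : ℝ) / 4) := by
  have : NeZero n := ⟨hn.ne_zero⟩
  set m := Nat.sqrt (Nat.sqrt n)
  have hlam' : (lam : ZMod n) ^ 2 + r * lam + s = 0 := by
    exact_mod_cast (ZMod.intCast_zmod_eq_zero_iff_dvd _ n).2 hlam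
  have hmu' : (mu : ZMod n) ^ 2 + 1 = 0 := by
    exact_mod_cast (ZMod.intCast_zmod_eq_zero_iff_dvd _ n).2 hmu
  obtain ⟨v, hv0, hvm, hv⟩ := exists_ne_zero_abs_le_map_eq_zero
    (eval (lam : ZMod n) mu).toAddMonoidHom m (by simpa using Nat.lt_sqrt_sqrt_add_one_pow_four n)
  obtain ⟨β, hβ⟩ := (mulMatrix r s v).exists_two_mul_abs_sub_mulVec_le
    (det_mulMatrix_ne_zero hpos hnsq hv0) (abs_mulMatrix_le hvm) (Pi.single 0 k)
  set K := Pi.single 0 k - mulMatrix r s v *ᵥ β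
  have hK : eval (lam : ZMod n) mu K = k := by
    simp only [LinearMap.toAddMonoidHom_coe] at hv
    rw [map_sub, eval_mulMatrix_mulVec hlam' hmu', hv]
    simp [eval_apply]
  refine ⟨K 0, K 1, K 2, K 3, (ZMod.intCast_eq_intCast_iff _ _ n).1 ?_, ?_⟩
  · rw [← hK, eval_apply]
    push_cast
    ring
  · have hKi : ∀ i, |K i| ≤ 2 * (s + |r| + 1) * m := fun i => by
      have := hβ i
      rw [abs_of_pos (by omega : 0 < s), Fintype.card_fin, Nat.cast_ofNat] at this
      linarith
    have hC : 1 ≤ s + |r| + 1 := by linarith [abs_nonneg r]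
    calc ((max (max |K 0| |K 1|) (max |K 2| |K 3|) : ℤ) : ℝ)
        ≤ 2 * ((s + |r| + 1 : ℤ) : ℝ) * m := by
          exact_mod_cast max_le (max_le (hKi 0) (hKi 1)) (max_le (hKi 2) (hKi 3))
      _ ≤ _ := two_mul_mul_le_sixteen_mul_rpow (by exact_mod_cast hC)
          (by exact_mod_cast add_abs_add_one_sq_le (by omega)) (Nat.cast_nonneg m)
          (by exact_mod_cast Nat.sqrt_sqrt_pow_four_le n)

/-- Theorem 1 of the paper (LLL-based bound): four-dimensional GLV decomposition
with coefficients at most `16·B³·n^(1/4)`, where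
`B = (4 + 4s² + 8s + 8|r| + 8|r|s + 2(r²+2s) + 2|r²−2s|)^(1/4)`. -/
theorem glv_four_dim_decomposition_LLL
    (n : ℕ) (hn : n.Prime) (hodd : Odd n)
    (r s : ℤ) (hs : 1 ≤ s)
    (hpos : 0 < 4 * s - r ^ 2)
    (hnsq : ¬ IsSquare (4 * s - r ^ 2))
    (hndvd : ¬ (n : ℤ) ∣ s * (4 * s - r ^ 2))
    (lam mu : ℤ)
    (hlam : (n : ℤ) ∣ lam ^ 2 + r * lam + s)
    (hmu : (n : ℤ) ∣ mu ^ 2 + 1)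
    (k : ℤ) :
    ∃ k₁ k₂ k₃ k₄ : ℤ,
      k ≡ k₁ + k₂ * lam + k₃ * mu + k₄ * lam * mu [ZMOD (n : ℤ)] ∧
      ((max (max |k₁| |k₂|) (max |k₃| |k₄|) : ℤ) : ℝ) ≤
        16 * (((4 + 4 * s ^ 2 + 8 * s + 8 * |r| + 8 * |r| * s + 2 * (r ^ 2 + 2 * s) +
          2 * |r ^ 2 - 2 * s| : ℤ) : ℝ) ^ ((1 : ℝ) / 4)) ^ 3 * (n : ℝ) ^ ((1 : ℝ) / 4) :=
  glv_four_dim_decomposition_LLL_general n hn r s hs hpos hnsq lam mu hlam hmu k
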